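/- Let n > 0 and r, t, t′, r₁, σ be real numbers satisfying r/2 < t ≤ t′, r₁ > n/2 + max{0, r}, and σ > max{ 3n/2 − t + r/2, n(t′ + max{t′, r₁} − r)/(min{t′, r₁} + t − r) }. Then 2 > [ ( n + n²/(σ − n/2 + t − r/2) ) / ( min{t′, r₁} + t − r ) ] · [ ( t′ + max{t′, r₁} − r ) / ( σ − n/2 + max{t′, r₁} − r/2 ) ]. (In particular, all denominators appearing above are strictly positive under these hypotheses.) -/

import Mathlib

/-! The first lower bound on `σ` gives `σ - n/2 + t - r/2 > n`, so the first numerator is below `2n`.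
The second gives `n (t' + max t' r₁ - r) / (min t' r₁ + t - r) < σ`, and `σ < σ - n/2 + max t' r₁ - r/2`
because `r₁ > n/2 + r/2`; so `n` times the remaining factors is below `1`. -/

lemma add_sub_pos_of_half_lt {a b r : ℝ} (ha : r / 2 < a) (hb : r / 2 < b) : 0 < a + b - r := by
  linarith

lemma add_sq_div_lt_two_mul {n A : ℝ} (hn : 0 < n) (hA : n < A) : n + n ^ 2 / A < 2 * n := by
  have : n ^ 2 / A < n := by
    rw [div_lt_iff₀ (hn.trans hA), sq]
    exact mul_lt_mul_of_pos_left hA hn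
  linarith

lemma div_mul_div_lt_two {x n M B C : ℝ} (hx : x < 2 * n) (hB : 0 < B) (hM : 0 < M) (hC : 0 < C)
    (hnB : n * B / M < C) : x / M * (B / C) < 2 := by
  rw [div_lt_iff₀ hM] at hnB
  rw [div_mul_div_comm, div_lt_iff₀ (mul_pos hM hC)]
  linarith [mul_lt_mul_of_pos_right hx hB]

theorem sample_size_condition (n r t t' r₁ σ : ℝ)
    (hn : 0 < n) (h1 : r / 2 < t) (h2 : t ≤ t')
    (h3 : n / 2 + max 0 r < r₁)
    (h4 : max (3 * n / 2 - t + r / 2)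
          (n * (t' + max t' r₁ - r) / (min t' r₁ + t - r)) < σ) :
    0 < σ - n / 2 + t - r / 2 ∧ 0 < min t' r₁ + t - r ∧
      0 < σ - n / 2 + max t' r₁ - r / 2 ∧
      ((n + n ^ 2 / (σ - n / 2 + t - r / 2)) / (min t' r₁ + t - r)) *
          ((t' + max t' r₁ - r) / (σ - n / 2 + max t' r₁ - r / 2)) < 2 := by
  obtain ⟨hσ_bias, hσ_decay⟩ := max_lt_iff.mp h4
  have hr₁ : n / 2 + r / 2 < r₁ := by linarith [le_max_left 0 r, le_max_right 0 r]
  have ht' : r / 2 < t' := h1.trans_le h2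
  have hA : n < σ - n / 2 + t - r / 2 := by linarith
  have hM : 0 < min t' r₁ + t - r := add_sub_pos_of_half_lt (lt_min ht' (by linarith)) h1
  have hB : 0 < t' + max t' r₁ - r := add_sub_pos_of_half_lt ht' (ht'.trans_le (le_max_left _ _))
  have hσC : σ < σ - n / 2 + max t' r₁ - r / 2 := by linarith [le_max_right t' r₁]
  have hC : 0 < σ - n / 2 + max t' r₁ - r / 2 := by linarith [le_max_left t' r₁]
  exact ⟨by linarith, hM, hC,
    div_mul_div_lt_two (add_sq_div_lt_two_mul hn hA) hB hM hC (hσ_decay.trans hσC)⟩
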